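/- arXiv:2503.20948 — 3 statements merged into one kernel-verified Lean document; each statement's English description precedes it below -/
import Mathlib

section
/- For every positive integer g, every matrix τ in the Siegel upper half space ℍ_g, and every z ∈ ℂ^g, the family indexed by n ∈ ℤ^g with terms exp(πi·nᵀτn + 2πi·nᵀz) is summable; i.e. the Riemann theta series ϑ(τ,z) = Σ_{n∈ℤ^g} exp(πi·nᵀτn + 2πi·nᵀz) converges absolutely. -/
open Complex Matrix BigOperators Real

-- auxiliary lemmas

-- pi product summability
lemma summable_pi_prod : ∀ (g : ℕ) (F : Fin g → ℤ → ℝ), (∀ j m, 0 ≤ F j m) →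
    (∀ j, Summable (F j)) → Summable (fun n : Fin g → ℤ => ∏ j, F j (n j)) := by
  intro g
  induction g with
  | zero => intro F _ _; exact Summable.of_finite
  | succ g ih =>
    intro F h0 hs
    have := ((hs 0).mul_of_nonneg (ih (fun j => F j.succ) (fun j m => h0 _ m)
      (fun j => hs _)) (fun m => h0 0 m) (fun n => Finset.prod_nonneg fun j _ => h0 _ _))
    refine ((Fin.consEquiv (fun _ : Fin (g+1) => ℤ)).summable_iff).mp (this.congr ?_)
    intro p
    simp [Fin.prod_univ_succ, Fin.consEquiv]

-- 1-d summability
lemma summable_one_dim {c : ℝ} (hc : 0 < c) (a : ℝ) :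
    Summable (fun m : ℤ => Real.exp (-(π * c) * m ^ 2 + a * |m|)) := by
  have := summable_pow_mul_jacobiTheta₂_term_bound (a / (2 * π)) hc 0
  simpa [mul_comm, mul_assoc, mul_div_assoc, mul_sub, pi_ne_zero, sub_eq_add_neg,
    neg_mul, neg_add] using this.congr fun m => by
      rw [pow_zero, one_mul]
      congr 1
      have hπ : (π:ℝ) ≠ 0 := pi_ne_zero
      field_simp
      push_cast
      ring

lemma posdef_coercive {g : ℕ} (hg : 0 < g) (Y : Matrix (Fin g) (Fin g) ℝ) (hY : Y.PosDef) :
    ∃ c : ℝ, 0 < c ∧ ∀ x : Fin g → ℝ,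
      c * ∑ j, x j ^ 2 ≤ ∑ j, ∑ k, x j * Y j k * x k := by
  set f : (Fin g → ℝ) → ℝ := fun x => ∑ j, ∑ k, x j * Y j k * x k with hf
  have hfpos : ∀ x : Fin g → ℝ, x ≠ 0 → 0 < f x := by
    intro x hx
    have := hY.dotProduct_mulVec_pos hx
    simpa [f, dotProduct, Matrix.mulVec, Finset.mul_sum, mul_assoc] using this
  have hfsmul : ∀ (a : ℝ) (x : Fin g → ℝ), f (a • x) = a ^ 2 * f x := by
    intro a x
    simp only [f, Finset.mul_sum]
    refine Finset.sum_congr rfl fun j _ => Finset.sum_congr rfl fun k _ => ?_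
    simp [Pi.smul_apply, smul_eq_mul]; ring
  haveI : Nonempty (Fin g) := ⟨⟨0, hg⟩⟩
  -- compactness on the Euclidean sphere
  have hcont : Continuous fun x : EuclideanSpace ℝ (Fin g) => f x := by
    apply continuous_finset_sum
    intro j _
    apply continuous_finset_sum
    intro k _
    exact (((EuclideanSpace.proj j).continuous.mul continuous_const).mul
      (EuclideanSpace.proj k).continuous)
  have hsphere : IsCompact (Metric.sphere (0 : EuclideanSpace ℝ (Fin g)) 1) :=
    isCompact_sphere _ _
  have hne : (Metric.sphere (0 : EuclideanSpace ℝ (Fin g)) 1).Nonempty :=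
    NormedSpace.sphere_nonempty.mpr zero_le_one
  obtain ⟨x₀, hx₀S, hx₀min⟩ := hsphere.exists_isMinOn hne hcont.continuousOn
  have hx₀norm : ‖x₀‖ = 1 := by simpa using hx₀S
  have hx₀ne : (x₀ : Fin g → ℝ) ≠ 0 := by
    intro h
    rw [show x₀ = 0 by ext i; simp [h]] at hx₀norm
    simp at hx₀norm
  refine ⟨f x₀, hfpos _ hx₀ne, fun x => ?_⟩
  by_cases hx : x = 0
  · simp [hx, f]
  · set xE : EuclideanSpace ℝ (Fin g) := WithLp.toLp 2 x with hxE
    have hxEne : xE ≠ 0 := fun h => hx (by simpa [xE] using congrArg WithLp.ofLp h)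
    have hr : (0:ℝ) < ‖xE‖ := norm_pos_iff.mpr hxEne
    have hmem : ‖xE‖⁻¹ • xE ∈ Metric.sphere (0 : EuclideanSpace ℝ (Fin g)) 1 := by
      simp [norm_smul, abs_of_pos (inv_pos.mpr hr), inv_mul_cancel₀ hr.ne']
    have hmin := hx₀min hmem
    have : f x₀ ≤ ‖xE‖⁻¹ ^ 2 * f x := by
      calc f x₀ ≤ f (‖xE‖⁻¹ • xE) := hmin
      _ = ‖xE‖⁻¹ ^ 2 * f x := hfsmul _ _
    have hnorm_sq : ‖xE‖ ^ 2 = ∑ j, x j ^ 2 := by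
      rw [EuclideanSpace.norm_eq]
      rw [Real.sq_sqrt (Finset.sum_nonneg fun j _ => sq_nonneg _)]
      exact Finset.sum_congr rfl fun j _ => by rw [Real.norm_eq_abs]; exact _root_.sq_abs (x j)
    calc f x₀ * ∑ j, x j ^ 2 = f x₀ * ‖xE‖ ^ 2 := by rw [hnorm_sq]
    _ ≤ (‖xE‖⁻¹ ^ 2 * f x) * ‖xE‖ ^ 2 := by
        apply mul_le_mul_of_nonneg_right this (sq_nonneg _)
    _ = f x := by field_simp

noncomputable section

/-- The quadratic form `vᵀ τ v = ∑_{j,k} τ_{jk} v_j v_k`. -/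
def qf {g : ℕ} (τ : Matrix (Fin g) (Fin g) ℂ) (v : Fin g → ℂ) : ℂ :=
  ∑ j, ∑ k, v j * τ j k * v k

/-- The pairing `vᵀ w = ∑_j v_j w_j`. -/
def dotc {g : ℕ} (v w : Fin g → ℂ) : ℂ := ∑ j, v j * w j

/-- The Siegel upper half space `ℍ_g`: complex symmetric `g × g` matrices whose
imaginary part is positive definite. -/
def Siegel (g : ℕ) : Set (Matrix (Fin g) (Fin g) ℂ) :=
  {τ | τ.IsSymm ∧ (τ.map Complex.im).PosDef}

/-- the Riemann theta series
`ϑ(τ,z) = ∑_{n ∈ ℤ^g} exp(πi·nᵀτn + 2πi·nᵀz)` converges absolutely, i.e. the family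
of its terms is summable, for every `τ ∈ ℍ_g` and `z ∈ ℂ^g`. -/
theorem riemann_theta_summable (g : ℕ) (hg : 0 < g)
    (τ : Matrix (Fin g) (Fin g) ℂ) (hτ : τ ∈ Siegel g) (z : Fin g → ℂ) :
    Summable (fun n : Fin g → ℤ =>
      Complex.exp ((π : ℂ) * I * qf τ (fun j => (n j : ℂ)) +
        2 * (π : ℂ) * I * dotc (fun j => (n j : ℂ)) z)) := by
  obtain ⟨hsymm, hY⟩ := hτ
  obtain ⟨c, hc, hkey⟩ := posdef_coercive hg (τ.map Complex.im) hY
  set F : Fin g → ℤ → ℝ :=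
    fun j m => Real.exp (-(π * c) * (m : ℝ) ^ 2 + (2 * π * |(z j).im|) * |(m : ℝ)|) with hF
  have hF0 : ∀ j m, 0 ≤ F j m := fun j m => (Real.exp_pos _).le
  have hFs : ∀ j, Summable (F j) := by
    intro j
    have h := summable_one_dim hc (2 * π * |(z j).im|)
    exact h.congr fun m => by simp only [hF]; push_cast; ring_nf
  apply Summable.of_norm_bounded (summable_pi_prod g F hF0 hFs)
  intro n
  have hnorm : ∀ w : ℂ, ‖Complex.exp w‖ = Real.exp w.re := fun w => Complex.norm_exp w
  rw [hnorm]
  have hprod : ∏ j, F j (n j) =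
      Real.exp (∑ j, (-(π * c) * (n j : ℝ) ^ 2 + (2 * π * |(z j).im|) * |(n j : ℝ)|)) :=
    (Real.exp_sum _ _).symm
  rw [hprod]
  apply Real.exp_le_exp.mpr
  -- compute the real part
  have hqim : (qf τ fun j => (n j : ℂ)).im =
      ∑ j, ∑ k, (n j : ℝ) * (τ.map Complex.im) j k * (n k : ℝ) := by
    simp only [qf, Complex.im_sum]
    refine Finset.sum_congr rfl fun j _ => Finset.sum_congr rfl fun k _ => ?_
    simp [Complex.mul_im, Complex.mul_re, Matrix.map_apply]
  have hdim : (dotc (fun j => (n j : ℂ)) z).im = ∑ j, (n j : ℝ) * (z j).im := by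
    simp only [dotc, Complex.im_sum]
    refine Finset.sum_congr rfl fun j _ => ?_
    simp [Complex.mul_im]
  have hre : ((π : ℂ) * I * qf τ (fun j => (n j : ℂ)) +
      2 * (π : ℂ) * I * dotc (fun j => (n j : ℂ)) z).re =
      -(π * (qf τ fun j => (n j : ℂ)).im) - 2 * π * (dotc (fun j => (n j : ℂ)) z).im := by
    simp [Complex.add_re, Complex.mul_re, Complex.mul_im]
    ring
  rw [hre, hqim, hdim]
  have h1 : -(π * ∑ j, ∑ k, (n j : ℝ) * (τ.map Complex.im) j k * (n k : ℝ)) ≤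
      -(π * (c * ∑ j, (n j : ℝ) ^ 2)) := by
    have := hkey fun j => (n j : ℝ)
    nlinarith [pi_pos]
  have h2 : -(2 * π * ∑ j, (n j : ℝ) * (z j).im) ≤
      ∑ j, (2 * π * |(z j).im|) * |(n j : ℝ)| := by
    rw [Finset.mul_sum, ← Finset.sum_neg_distrib]
    refine Finset.sum_le_sum fun j _ => ?_
    have habs : -((n j : ℝ) * (z j).im) ≤ |(n j : ℝ)| * |(z j).im| := by
      rw [← abs_mul]; exact neg_le_abs _
    nlinarith [pi_pos]
  have e : ∑ j, (-(π * c) * (n j : ℝ) ^ 2) = -(π * (c * ∑ j, (n j : ℝ) ^ 2)) := by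
    rw [← Finset.mul_sum]; ring
  calc -(π * ∑ j, ∑ k, (n j : ℝ) * (τ.map Complex.im) j k * (n k : ℝ)) -
        2 * π * ∑ j, (n j : ℝ) * (z j).im
      = -(π * ∑ j, ∑ k, (n j : ℝ) * (τ.map Complex.im) j k * (n k : ℝ)) +
        -(2 * π * ∑ j, (n j : ℝ) * (z j).im) := by ring
    _ ≤ -(π * (c * ∑ j, (n j : ℝ) ^ 2)) + ∑ j, (2 * π * |(z j).im|) * |(n j : ℝ)| :=
        add_le_add h1 h2
    _ = ∑ j, (-(π * c) * (n j : ℝ) ^ 2 + (2 * π * |(z j).im|) * |(n j : ℝ)|) := by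
        rw [Finset.sum_add_distrib, e]
end
end

section
/- Let g be a positive integer, τ ∈ ℍ_g, and c, d ∈ ℝ^g. Let W be the ℂ-vector space of entire functions F : ℂ^g → ℂ satisfying F(z + a + τb) = exp(2πi·(cᵀa − dᵀb)) · F(z) for all z ∈ ℂ^g and all a, b ∈ ℤ^g. If c ∈ ℤ^g and d ∈ ℤ^g, then W consists exactly of the constant functions (and has dimension 1); otherwise W = {0}. (This is the w = 0 part of the theorem computing H^w(V_τ, 𝕃_{[z]}): H^0 = ℂ when [z] = [0] and H^0 = 0 when [z] ≠ [0], stated via the identification of sections of degree-zero line bundles with quasi-periodic entire functions.) -/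
open Complex Matrix BigOperators Real

noncomputable section

/-- The space `W` of entire functions `F : ℂ^g → ℂ` satisfying
`F(z + a + τb) = exp(2πi·(cᵀa − dᵀb)) · F(z)` for all `z ∈ ℂ^g`, `a, b ∈ ℤ^g`
(the sections of the degree-zero line bundle `𝕃_{[d+τc]}`). -/
def sectionsDeg0 {g : ℕ} (τ : Matrix (Fin g) (Fin g) ℂ) (c d : Fin g → ℝ) :
    Set ((Fin g → ℂ) → ℂ) :=
  {F | Differentiable ℂ F ∧ ∀ (z : Fin g → ℂ) (a b : Fin g → ℤ),
    F (z + (fun j => (a j : ℂ)) + τ.mulVec (fun j => (b j : ℂ)))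
      = Complex.exp (2 * (π : ℂ) * I *
            (dotc (fun j => (c j : ℂ)) (fun j => (a j : ℂ))
              - dotc (fun j => (d j : ℂ)) (fun j => (b j : ℂ)))) * F z}

/-- The real-linear "period" map `(a, b) ↦ a + τ b`. -/
def periodMap {g : ℕ} (τ : Matrix (Fin g) (Fin g) ℂ) :
    ((Fin g → ℝ) × (Fin g → ℝ)) →ₗ[ℝ] (Fin g → ℂ) :=
  (LinearMap.compLeft (Algebra.linearMap ℝ ℂ) (Fin g)).coprod
    (((Matrix.mulVecLin τ).restrictScalars ℝ).comp (LinearMap.compLeft (Algebra.linearMap ℝ ℂ) (Fin g)))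

lemma periodMap_apply {g : ℕ} (τ : Matrix (Fin g) (Fin g) ℂ) (x : (Fin g → ℝ) × (Fin g → ℝ)) :
    periodMap τ x = (fun j => (x.1 j : ℂ)) + τ.mulVec (fun j => (x.2 j : ℂ)) := by
  simp [periodMap, LinearMap.coprod_apply, LinearMap.compLeft, Algebra.linearMap_apply,
    Complex.coe_algebraMap]
  rfl

lemma periodMap_surjective {g : ℕ} {τ : Matrix (Fin g) (Fin g) ℂ} (hτ : τ ∈ Siegel g) :
    Function.Surjective (periodMap τ) := by
  rw [← LinearMap.injective_iff_surjective_of_finrank_eq_finrank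
    (by simp [Module.finrank_prod, Module.finrank_pi, Module.finrank_pi_fintype,
      Complex.finrank_real_complex]; ring)]
  rw [← LinearMap.ker_eq_bot, LinearMap.ker_eq_bot']
  rintro ⟨a, b⟩ h
  rw [periodMap_apply] at h
  have him : (τ.map Complex.im).mulVec b = 0 := by
    funext j
    have h2 := congrArg Complex.im (congrFun h j)
    simpa [Matrix.mulVec, dotProduct, Complex.im_sum, Complex.mul_im] using h2
  have hb : b = 0 := by
    by_contra hb
    have := (Matrix.posDef_iff_dotProduct_mulVec.mp hτ.2).2 hb
    rw [him] at this
    simp at this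
  subst hb
  have ha : a = 0 := by
    funext j
    have h2 := congrArg Complex.re (congrFun h j)
    simpa [Matrix.mulVec, dotProduct] using h2
  simp [ha]

lemma exp_abs_one {g : ℕ} (c d : Fin g → ℝ) (a b : Fin g → ℤ) :
    ‖(Complex.exp (2 * (π : ℂ) * I *
        (dotc (fun j => (c j : ℂ)) (fun j => ((a j : ℤ) : ℂ))
          - dotc (fun j => (d j : ℂ)) (fun j => ((b j : ℤ) : ℂ)))))‖ = 1 := by
  have h : (2 * (π : ℂ) * I *
        (dotc (fun j => (c j : ℂ)) (fun j => ((a j : ℤ) : ℂ))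
          - dotc (fun j => (d j : ℂ)) (fun j => ((b j : ℤ) : ℂ))))
      = ((2 * π * (∑ j, c j * (a j : ℝ) - ∑ j, d j * (b j : ℝ)) : ℝ) : ℂ) * I := by
    simp only [dotc]
    push_cast
    ring
  rw [h, Complex.norm_exp_ofReal_mul_I]

/-- Any element of `sectionsDeg0` is constant. -/
lemma constant_of_mem {g : ℕ} {τ : Matrix (Fin g) (Fin g) ℂ} (hτ : τ ∈ Siegel g)
    {c d : Fin g → ℝ} {F : (Fin g → ℂ) → ℂ} (hF : F ∈ sectionsDeg0 τ c d) :
    ∀ z w, F z = F w := by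
  obtain ⟨hdiff, hqp⟩ := hF
  have hKc : IsCompact ((periodMap τ) '' (Set.Icc 0 1)) :=
    (isCompact_Icc).image (periodMap τ).continuous_of_finiteDimensional
  obtain ⟨M, hM⟩ := hKc.exists_bound_of_continuousOn (hdiff.continuous.continuousOn)
  have hbound : ∀ z, ‖F z‖ ≤ M := by
    intro z
    obtain ⟨x, hx⟩ := periodMap_surjective hτ z
    set a : Fin g → ℤ := fun j => ⌊x.1 j⌋ with ha
    set b : Fin g → ℤ := fun j => ⌊x.2 j⌋ with hb
    set y : (Fin g → ℝ) × (Fin g → ℝ) :=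
      (fun j => Int.fract (x.1 j), fun j => Int.fract (x.2 j)) with hy
    have hymem : y ∈ Set.Icc (0 : (Fin g → ℝ) × (Fin g → ℝ)) 1 := by
      simp only [Set.mem_Icc, Prod.le_def, Pi.le_def, hy, Prod.fst, Prod.snd,
        Pi.zero_apply, Pi.one_apply]
      exact ⟨⟨fun j => Int.fract_nonneg _, fun j => Int.fract_nonneg _⟩,
        ⟨fun j => (Int.fract_lt_one _).le, fun j => (Int.fract_lt_one _).le⟩⟩
    have hxy : x = y + (fun j => ((a j : ℝ)), fun j => ((b j : ℝ))) := by
      refine Prod.ext ?_ ?_ <;> funext j <;>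
        simp [hy, ha, hb, Prod.fst_add, Prod.snd_add, Pi.add_apply, Int.fract_add_floor]
    have hz : z = periodMap τ y + ((fun j => ((a j : ℤ) : ℂ))
        + τ.mulVec (fun j => ((b j : ℤ) : ℂ))) := by
      rw [← hx, hxy, map_add]
      congr 1
    rw [← add_assoc] at hz
    rw [hz, hqp (periodMap τ y) a b, norm_mul]
    have h1 : ‖Complex.exp (2 * (π : ℂ) * I *
        (dotc (fun j => (c j : ℂ)) (fun j => ((a j : ℤ) : ℂ))
          - dotc (fun j => (d j : ℂ)) (fun j => ((b j : ℤ) : ℂ))))‖ = 1 :=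
      exp_abs_one c d a b
    rw [h1, one_mul]
    exact hM _ ⟨y, hymem, rfl⟩
  intro z w
  exact hdiff.apply_eq_apply_of_bounded
    (Bornology.IsBounded.subset (Metric.isBounded_closedBall (x := (0:ℂ)) (r := M))
      (by rintro _ ⟨u, rfl⟩; simpa [Metric.mem_closedBall] using hbound u)) z w

lemma eq_zero_of_fixed {w : ℂ} {r : ℝ} (hr : ∀ m : ℤ, r ≠ (m : ℝ))
    (h : w = Complex.exp (2 * (π : ℂ) * I * (r : ℂ)) * w) : w = 0 := by
  by_contra hw
  have h1 : Complex.exp (2 * (π : ℂ) * I * (r : ℂ)) = 1 := by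
    have := h.symm
    nth_rewrite 2 [show w = 1 * w by ring] at this
    exact mul_right_cancel₀ hw this
  rw [Complex.exp_eq_one_iff] at h1
  obtain ⟨n, hn⟩ := h1
  have h2πI : (2 * (π : ℂ) * I) ≠ 0 := by
    simp [Real.pi_ne_zero, Complex.I_ne_zero, Complex.ofReal_ne_zero]
  have hrn : (r : ℂ) = (n : ℂ) := by
    apply mul_left_cancel₀ h2πI
    rw [hn]; ring
  exact hr n (by exact_mod_cast hrn)

/-- if `c ∈ ℤ^g` and `d ∈ ℤ^g` then the space of quasi-periodic entire
functions `W` consists exactly of the constant functions; otherwise `W = {0}`.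
(The computation of `H^0(V_τ, 𝕃_{[z]})`.) -/
theorem sections_of_degree_zero_line_bundle (g : ℕ) (hg : 0 < g)
    (τ : Matrix (Fin g) (Fin g) ℂ) (hτ : τ ∈ Siegel g) (c d : Fin g → ℝ) :
    (((∀ j, ∃ m : ℤ, c j = (m : ℝ)) ∧ (∀ j, ∃ m : ℤ, d j = (m : ℝ))) →
      sectionsDeg0 τ c d = {F | ∃ w : ℂ, F = fun _ => w}) ∧
    (¬((∀ j, ∃ m : ℤ, c j = (m : ℝ)) ∧ (∀ j, ∃ m : ℤ, d j = (m : ℝ))) →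
      sectionsDeg0 τ c d = {F | F = 0}) := by
  constructor
  · rintro ⟨hc, hd⟩
    ext F
    constructor
    · intro hF
      exact ⟨F 0, funext fun z => constant_of_mem hτ hF z 0⟩
    · rintro ⟨w, rfl⟩
      refine ⟨differentiable_const _, fun z a b => ?_⟩
      choose mc hmc using hc
      choose md hmd using hd
      have h : (2 * (π : ℂ) * I *
          (dotc (fun j => (c j : ℂ)) (fun j => ((a j : ℤ) : ℂ))
            - dotc (fun j => (d j : ℂ)) (fun j => ((b j : ℤ) : ℂ))))
          = ((∑ j, mc j * a j - ∑ j, md j * b j : ℤ) : ℂ) * (2 * (π : ℂ) * I) := by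
        simp only [dotc, hmc, hmd]
        push_cast
        ring
      rw [h, Complex.exp_int_mul_two_pi_mul_I, one_mul]
  · intro hcd
    ext F
    simp only [Set.mem_setOf_eq]
    constructor
    · intro hF
      have hconst := constant_of_mem hτ hF
      obtain ⟨hdiff, hqp⟩ := hF
      have hw0 : F 0 = 0 := by
        rcases not_and_or.mp hcd with h | h
        · push_neg at h
          obtain ⟨j, hj⟩ := h
          have key := hqp 0 (Pi.single j 1) 0
          have e0 : (fun k => (((0 : Fin g → ℤ) k : ℤ) : ℂ)) = (0 : Fin g → ℂ) := by
            funext k; simp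
          rw [e0, Matrix.mulVec_zero] at key
          have ed : dotc (fun k => (d k : ℂ)) (0 : Fin g → ℂ) = 0 := by
            simp [dotc]
          have ec : dotc (fun k => (c k : ℂ)) (fun k => ((Pi.single j 1 : Fin g → ℤ) k : ℂ))
              = ((c j : ℝ) : ℂ) := by
            simp only [dotc, Pi.single_apply]
            rw [Finset.sum_eq_single j] <;> simp +contextual
          rw [ed, ec, sub_zero] at key
          have hFl : F (0 + (fun k => ((Pi.single j 1 : Fin g → ℤ) k : ℂ)) + 0) = F 0 := hconst _ _
          rw [hFl] at key
          exact eq_zero_of_fixed hj key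
        · push_neg at h
          obtain ⟨j, hj⟩ := h
          have key := hqp 0 0 (Pi.single j 1)
          have e0 : (fun k => (((0 : Fin g → ℤ) k : ℤ) : ℂ)) = (0 : Fin g → ℂ) := by
            funext k; simp
          rw [e0] at key
          have ec : dotc (fun k => (c k : ℂ)) (0 : Fin g → ℂ) = 0 := by
            simp [dotc]
          have ed : dotc (fun k => (d k : ℂ)) (fun k => ((Pi.single j 1 : Fin g → ℤ) k : ℂ))
              = ((d j : ℝ) : ℂ) := by
            simp only [dotc, Pi.single_apply]
            rw [Finset.sum_eq_single j] <;> simp +contextual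
          rw [ec, ed, zero_sub] at key
          have hFl : F (0 + 0 + τ.mulVec (fun k => ((Pi.single j 1 : Fin g → ℤ) k : ℂ))) = F 0 :=
            hconst _ _
          rw [hFl] at key
          have key' : F 0 = Complex.exp (2 * (π : ℂ) * I * ((-(d j) : ℝ) : ℂ)) * F 0 := by
            rw [show (((-(d j) : ℝ)) : ℂ) = -((d j : ℝ) : ℂ) by push_cast; ring]
            exact key
          refine eq_zero_of_fixed (r := -(d j)) (fun m hm => hj (-m) ?_) key'
          push_cast at hm ⊢
          linarith
      funext z
      rw [show F z = F 0 from hconst z 0, hw0]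
      rfl
    · rintro rfl
      exact ⟨differentiable_const 0, fun z a b => by simp⟩
end
end

section
/- Let g be a positive integer, τ ∈ ℍ_g, k a positive integer, and c, d ∈ ℝ^g. If an entire function F : ℂ^g → ℂ satisfies F(z + a + τb) = exp(2πi·(cᵀa − dᵀb)) · exp(kπi·bᵀτb + 2πik·bᵀz) · F(z) for all z ∈ ℂ^g and all a, b ∈ ℤ^g, then F is identically zero. (Vanishing of H^0 of a line bundle of negative polarization degree −k on V_τ, stated via the identification of sections with quasi-periodic entire functions; this is the w = 0, k' < k case of the theorem computing Ext^w(𝓛^{⊗k} ⊗ 𝕃_{[z]}, 𝓛^{⊗k'} ⊗ 𝕃_{[z']}).) -/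
open Complex Matrix BigOperators Real

noncomputable section

/-- if an entire function `F : ℂ^g → ℂ` satisfies
`F(z + a + τb) = exp(2πi·(cᵀa − dᵀb)) · exp(kπi·bᵀτb + 2πik·bᵀz) · F(z)`
for all `z ∈ ℂ^g` and `a, b ∈ ℤ^g` (with `k > 0`), then `F ≡ 0`.
(Vanishing of `H^0` of a line bundle of negative polarization degree `−k`.) -/
theorem no_sections_negative_degree (g k : ℕ) (hg : 0 < g) (hk : 0 < k)
    (τ : Matrix (Fin g) (Fin g) ℂ) (hτ : τ ∈ Siegel g) (c d : Fin g → ℝ)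
    (F : (Fin g → ℂ) → ℂ) (hdiff : Differentiable ℂ F)
    (hqp : ∀ (z : Fin g → ℂ) (a b : Fin g → ℤ),
      F (z + (fun j => (a j : ℂ)) + τ.mulVec (fun j => (b j : ℂ)))
        = Complex.exp (2 * (π : ℂ) * I *
              (dotc (fun j => (c j : ℂ)) (fun j => (a j : ℂ))
                - dotc (fun j => (d j : ℂ)) (fun j => (b j : ℂ))))
          * Complex.exp ((k : ℂ) * (π : ℂ) * I * qf τ (fun j => (b j : ℂ))
              + 2 * (π : ℂ) * I * (k : ℂ) * dotc (fun j => (b j : ℂ)) z)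
          * F z) :
    F = 0 := by
  classical
  obtain ⟨hsymm, hY⟩ := hτ
  set Y : Matrix (Fin g) (Fin g) ℝ := τ.map Complex.im with hYdef
  set Tre : Matrix (Fin g) (Fin g) ℝ := τ.map Complex.re with hTredef
  have hπ : (0:ℝ) ≤ (k:ℝ) * π := mul_nonneg (Nat.cast_nonneg k) Real.pi_pos.le
  have hYs : ∀ j k', Y j k' = Y k' j := by
    intro j k'
    simp only [hYdef, Matrix.map_apply]
    rw [hsymm.apply j k']
  -- the real bilinear form attached to Y
  set Bf : (Fin g → ℝ) → (Fin g → ℝ) → ℝ :=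
    fun w w' => ∑ j, ∑ k', w j * Y j k' * w' k' with hBfdef
  have hBpos : ∀ w, 0 ≤ Bf w w := by
    intro w
    have h := hY.posSemidef.dotProduct_mulVec_nonneg w
    have e : star w ⬝ᵥ Y *ᵥ w = Bf w w := by
      simp [hBfdef, dotProduct, Matrix.mulVec, Finset.mul_sum, mul_assoc]
    rwa [e] at h
  have hBsymm : ∀ w w', Bf w' w = Bf w w' := by
    intro w w'
    rw [hBfdef]
    simp only
    rw [Finset.sum_comm]
    exact Finset.sum_congr rfl fun k' _ => Finset.sum_congr rfl fun j _ => by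
      rw [hYs k' j]; ring
  have hBmul : ∀ w w', ∑ j, w j * (Y *ᵥ w') j = Bf w w' := by
    intro w w'
    simp [hBfdef, Matrix.mulVec, dotProduct, Finset.mul_sum, mul_assoc]
  have hBexp : ∀ w w', Bf (w + w') (w + w') = Bf w w + 2 * Bf w w' + Bf w' w' := by
    intro w w'
    have h1 : Bf (w + w') (w + w') = Bf w w + Bf w w' + Bf w' w + Bf w' w' := by
      simp only [hBfdef, Pi.add_apply]
      rw [← Finset.sum_add_distrib, ← Finset.sum_add_distrib, ← Finset.sum_add_distrib]
      refine Finset.sum_congr rfl fun j _ => ?_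
      rw [← Finset.sum_add_distrib, ← Finset.sum_add_distrib, ← Finset.sum_add_distrib]
      exact Finset.sum_congr rfl fun k' _ => by ring
    rw [h1, hBsymm w' w]; ring
  -- imaginary parts of the complex quantities
  have him_qf : ∀ w : Fin g → ℝ, (qf τ (fun j => ((w j:ℝ):ℂ))).im = Bf w w := by
    intro w
    rw [qf, Complex.im_sum]
    refine Finset.sum_congr rfl fun j _ => ?_
    rw [Complex.im_sum]
    exact Finset.sum_congr rfl fun k' _ => by
      simp [Complex.mul_im, Complex.mul_re, hYdef, Matrix.map_apply]
  have him_dot : ∀ (w : Fin g → ℝ) (z : Fin g → ℂ),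
      (dotc (fun j => ((w j:ℝ):ℂ)) z).im = ∑ j, w j * (z j).im := by
    intro w z
    rw [dotc, Complex.im_sum]
    exact Finset.sum_congr rfl fun j _ => by simp [Complex.mul_im]
  have hre : ∀ (r : ℝ) (w : ℂ), ((r:ℂ) * (I * w)).re = -(r * w.im) := by
    intro r w; simp [Complex.mul_re]
  -- the modulus identity coming from quasi-periodicity
  have hnorm : ∀ (z : Fin g → ℂ) (a b : Fin g → ℤ),
      ‖F (z + (fun j => ((a j : ℤ) : ℂ)) + τ.mulVec (fun j => ((b j : ℤ) : ℂ)))‖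
        = Real.exp (-((k:ℝ)*π) * (Bf (fun j => ((b j : ℤ):ℝ)) (fun j => ((b j : ℤ):ℝ))
            + 2 * ∑ j, ((b j : ℤ):ℝ) * (z j).im)) * ‖F z‖ := by
    intro z a b
    have hcast : (fun j => ((b j : ℤ) : ℂ)) = (fun j => (((b j : ℤ):ℝ):ℂ)) := by
      funext j; push_cast; rfl
    rw [hqp z a b, norm_mul, norm_mul]
    have e1 : ‖Complex.exp (2 * (π : ℂ) * I *
        (dotc (fun j => ((c j:ℝ) : ℂ)) (fun j => ((a j : ℤ) : ℂ))
          - dotc (fun j => ((d j:ℝ) : ℂ)) (fun j => ((b j : ℤ) : ℂ))))‖ = 1 := by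
      have hr : 2 * (π : ℂ) * I *
          (dotc (fun j => ((c j:ℝ) : ℂ)) (fun j => ((a j : ℤ) : ℂ))
            - dotc (fun j => ((d j:ℝ) : ℂ)) (fun j => ((b j : ℤ) : ℂ)))
          = ((2 * π * (∑ j, c j * (a j : ℝ) - ∑ j, d j * (b j : ℝ)) : ℝ) : ℂ) * I := by
        simp only [dotc]
        push_cast
        ring
      rw [hr, Complex.norm_exp]
      simp [Complex.mul_re]
    have e2 : ‖Complex.exp ((k : ℂ) * (π : ℂ) * I * qf τ (fun j => ((b j : ℤ) : ℂ))
          + 2 * (π : ℂ) * I * (k : ℂ) * dotc (fun j => ((b j : ℤ) : ℂ)) z)‖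
        = Real.exp (-((k:ℝ)*π) * (Bf (fun j => ((b j : ℤ):ℝ)) (fun j => ((b j : ℤ):ℝ))
            + 2 * ∑ j, ((b j : ℤ):ℝ) * (z j).im)) := by
      rw [Complex.norm_exp]
      congr 1
      have hrw : (k : ℂ) * (π : ℂ) * I * qf τ (fun j => ((b j : ℤ) : ℂ))
            + 2 * (π : ℂ) * I * (k : ℂ) * dotc (fun j => ((b j : ℤ) : ℂ)) z
          = (((k:ℝ) * π : ℝ) : ℂ) * (I * qf τ (fun j => ((b j : ℤ) : ℂ)))
            + ((2 * π * (k:ℝ) : ℝ) : ℂ) * (I * dotc (fun j => ((b j : ℤ) : ℂ)) z) := by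
        push_cast; ring
      rw [hrw, Complex.add_re, hre, hre, hcast, him_qf, him_dot]
      ring
    rw [e1, e2, one_mul]
  -- decomposition of the complex vector τ *ᵥ w for real w
  have hTC : ∀ (w : Fin g → ℝ) (j : Fin g),
      (τ.mulVec fun i => ((w i:ℝ):ℂ)) j
        = (((Tre *ᵥ w) j : ℝ):ℂ) + (((Y *ᵥ w) j : ℝ):ℂ) * I := by
    intro w j
    simp [Matrix.mulVec, dotProduct, Complex.ext_iff, Complex.re_sum, Complex.im_sum,
      Complex.mul_re, Complex.mul_im, Matrix.map_apply, hYdef, hTredef]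
  -- boundedness of F
  set φ : (Fin g → ℝ) × (Fin g → ℝ) → (Fin g → ℂ) :=
    fun p => (fun j => ((p.1 j:ℝ):ℂ)) + τ.mulVec (fun j => ((p.2 j:ℝ):ℂ)) with hφdef
  have hφ : Continuous φ := by
    apply continuous_pi; intro j
    simp only [hφdef, Pi.add_apply, Matrix.mulVec, dotProduct]
    fun_prop
  have hK : IsCompact (φ '' ((Set.Icc (0:Fin g → ℝ) 1) ×ˢ (Set.Icc (0:Fin g → ℝ) 1))) :=
    (isCompact_Icc.prod isCompact_Icc).image hφ
  obtain ⟨M, hM⟩ := hK.exists_bound_of_continuousOn hdiff.continuous.continuousOn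
  set B : ℝ := ∑ j, ∑ k', |Y j k'| with hBdef
  have hMb : ∀ z, ‖F z‖ ≤ Real.exp ((k:ℝ)*π*B) * M := by
    intro z
    set v : Fin g → ℝ := Y⁻¹ *ᵥ (fun j => (z j).im) with hv
    set u : Fin g → ℝ := (fun j => (z j).re) - Tre *ᵥ v with hu
    set bI : Fin g → ℤ := fun j => ⌊v j⌋ with hbI
    set aI : Fin g → ℤ := fun j => ⌊u j⌋ with haI
    set f : Fin g → ℝ := fun j => Int.fract (v j) with hf
    set uf : Fin g → ℝ := fun j => Int.fract (u j) with huf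
    set bR : Fin g → ℝ := fun j => ((bI j : ℤ) : ℝ) with hbR
    have hmem : (uf, f) ∈ (Set.Icc (0:Fin g → ℝ) 1) ×ˢ (Set.Icc (0:Fin g → ℝ) 1) := by
      refine ⟨⟨fun j => ?_, fun j => ?_⟩, ⟨fun j => ?_, fun j => ?_⟩⟩
      · exact Int.fract_nonneg _
      · exact (Int.fract_lt_one _).le
      · exact Int.fract_nonneg _
      · exact (Int.fract_lt_one _).le
    set z₀ : Fin g → ℂ := φ (uf, f) with hz0
    have hinv : Y *ᵥ v = fun j => (z j).im := by
      rw [hv, Matrix.mulVec_mulVec, Matrix.mul_nonsing_inv _ hY.det_pos.ne'.isUnit,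
        Matrix.one_mulVec]
    have h1 : (fun j => ((uf j:ℝ):ℂ)) + (fun j => ((aI j : ℤ):ℂ)) = (fun j => ((u j:ℝ):ℂ)) := by
      funext j
      have : uf j + (aI j : ℝ) = u j := by
        simpa [huf, haI, add_comm] using Int.floor_add_fract (u j)
      simp only [Pi.add_apply]
      rw [← this]; push_cast; ring
    have h2 : (fun j => ((f j:ℝ):ℂ)) + (fun j => ((bI j : ℤ):ℂ)) = (fun j => ((v j:ℝ):ℂ)) := by
      funext j
      have : f j + (bI j : ℝ) = v j := by
        simpa [hf, hbI, add_comm] using Int.floor_add_fract (v j)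
      simp only [Pi.add_apply]
      rw [← this]; push_cast; ring
    have hzdec : z₀ + (fun j => ((aI j : ℤ):ℂ)) + τ.mulVec (fun j => ((bI j : ℤ):ℂ)) = z := by
      have hbc : (fun j => ((bI j : ℤ):ℂ)) = (fun j => (((bI j : ℤ):ℝ):ℂ)) := by
        funext j; push_cast; rfl
      calc z₀ + (fun j => ((aI j : ℤ):ℂ)) + τ.mulVec (fun j => ((bI j : ℤ):ℂ))
          = ((fun j => ((uf j:ℝ):ℂ)) + (fun j => ((aI j : ℤ):ℂ)))
            + (τ.mulVec (fun j => ((f j:ℝ):ℂ)) + τ.mulVec (fun j => ((bI j : ℤ):ℂ))) := by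
            rw [hz0, hφdef]; ring
        _ = (fun j => ((u j:ℝ):ℂ)) + τ.mulVec ((fun j => ((f j:ℝ):ℂ)) + (fun j => ((bI j : ℤ):ℂ))) := by
            rw [h1, Matrix.mulVec_add]
        _ = (fun j => ((u j:ℝ):ℂ)) + τ.mulVec (fun j => ((v j:ℝ):ℂ)) := by rw [h2]
        _ = z := by
            funext j
            rw [Pi.add_apply, hTC v j]
            have him : (Y *ᵥ v) j = (z j).im := congrFun hinv j
            have hre' : u j + (Tre *ᵥ v) j = (z j).re := by
              rw [hu]; simp
            rw [him]
            apply Complex.ext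
            · simpa using hre'
            · simp
    have him0 : ∀ j, (z₀ j).im = (Y *ᵥ f) j := by
      intro j
      rw [hz0, hφdef]
      simp only [Pi.add_apply, hTC f j]
      simp
    have hn := hnorm z₀ aI bI
    rw [hzdec] at hn
    have hsum : ∑ j, ((bI j : ℤ):ℝ) * (z₀ j).im = Bf bR f := by
      simp only [him0]
      exact hBmul bR f
    rw [hn, hsum]
    have hff : Bf f f ≤ B := by
      rw [hBfdef, hBdef]
      refine Finset.sum_le_sum fun j _ => Finset.sum_le_sum fun k' _ => ?_
      have h0j : 0 ≤ f j := Int.fract_nonneg _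
      have h1j : f j ≤ 1 := (Int.fract_lt_one _).le
      have h0k : 0 ≤ f k' := Int.fract_nonneg _
      have h1k : f k' ≤ 1 := (Int.fract_lt_one _).le
      have hle : Y j k' ≤ |Y j k'| := le_abs_self _
      calc f j * Y j k' * f k' ≤ f j * |Y j k'| * f k' :=
            mul_le_mul_of_nonneg_right (mul_le_mul_of_nonneg_left hle h0j) h0k
        _ ≤ f j * |Y j k'| := mul_le_of_le_one_right (mul_nonneg h0j (abs_nonneg _)) h1k
        _ ≤ |Y j k'| := mul_le_of_le_one_left (abs_nonneg _) h1j
    have hexp : -((k:ℝ)*π) * (Bf bR bR + 2 * Bf bR f) ≤ (k:ℝ)*π*B := by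
      have hq := hBpos (bR + f)
      rw [hBexp bR f] at hq
      nlinarith [hπ, hff, hBpos f]
    have hz0M : ‖F z₀‖ ≤ M := hM _ ⟨(uf, f), hmem, rfl⟩
    exact mul_le_mul (Real.exp_le_exp.2 hexp) hz0M (norm_nonneg _) (Real.exp_nonneg _)
  -- Liouville: F is constant
  have hconst : ∀ z, F z = F 0 := by
    intro z
    apply hdiff.apply_eq_apply_of_bounded
    rw [Metric.isBounded_iff_subset_closedBall 0]
    exact ⟨Real.exp ((k:ℝ)*π*B) * M, by rintro x ⟨w, rfl⟩; simpa using hMb w⟩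
  -- conclude F 0 = 0 using quasi-periodicity in the τ-direction
  have hF0 : F 0 = 0 := by
    set i0 : Fin g := ⟨0, hg⟩ with hi0
    set b1 : Fin g → ℤ := fun j => if j = i0 then 1 else 0 with hb1
    set z2 : Fin g → ℂ := fun j => if j = i0 then 1/(2*(k:ℂ)) else 0 with hz2
    have hk' : ((k:ℕ) : ℂ) ≠ 0 := Nat.cast_ne_zero.2 hk.ne'
    have hd2 : dotc (fun j => ((b1 j : ℤ):ℂ)) z2 = 1/(2*(k:ℂ)) := by
      rw [dotc, Finset.sum_eq_single i0]
      · simp [hb1, hz2]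
      · intro j _ hj; simp [hb1, hz2, hj]
      · intro h; exact absurd (Finset.mem_univ i0) h
    have hdz0 : dotc (fun j => ((b1 j : ℤ):ℂ)) (0 : Fin g → ℂ) = 0 := by simp [dotc]
    have h1 := hqp 0 0 b1
    have h2 := hqp z2 0 b1
    rw [hconst, hdz0] at h1
    rw [hconst, hd2, hconst z2] at h2
    set E1 := Complex.exp (2 * (π : ℂ) * I *
        (dotc (fun j => ((c j:ℝ) : ℂ)) (fun j => (((0:Fin g → ℤ) j : ℤ) : ℂ))
          - dotc (fun j => ((d j:ℝ) : ℂ)) (fun j => ((b1 j : ℤ) : ℂ)))) with hE1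
    set A := (k : ℂ) * (π : ℂ) * I * qf τ (fun j => ((b1 j : ℤ) : ℂ)) with hA
    simp only [mul_zero, add_zero] at h1
    have he : A + 2 * (π : ℂ) * I * (k : ℂ) * (1/(2*(k:ℂ))) = A + (π:ℂ) * I := by
      field_simp
    rw [he, Complex.exp_add, Complex.exp_pi_mul_I] at h2
    have h3 : (2:ℂ) * F 0 = 0 := by linear_combination h1 + h2
    simpa using h3
  funext z
  simp only [Pi.zero_apply]
  rw [hconst z, hF0]
end
end
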